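/- arXiv:2208.07549 — 2 statements merged into one kernel-verified Lean document; each statement's English description precedes it below -/
import Mathlib

section
/- For every positive integer m and all integers n ≥ r ≥ 0, the generalized degenerate Euler-Genocchi polynomials of order −m satisfy A^{(r,−m)}_{n,λ}(x) = ((n)_r / 2^m) · ∑_{k=0}^{m} C(m,k) · (k+x)_{n−r,λ}, where (n)_r = n(n−1)⋯(n−r+1) is the falling factorial. -/
open Finset

noncomputable section

/-- The generalized falling factorial `(x)_{n,λ} = x(x-λ)⋯(x-(n-1)λ)`. -/
def gff (lam x : ℝ) (n : ℕ) : ℝ := ∏ i ∈ Finset.range n, (x - i * lam)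

/-- The ordinary falling factorial `(x)_r = x(x-1)⋯(x-r+1)` of a real number. -/
def ff (x : ℝ) (r : ℕ) : ℝ := ∏ i ∈ Finset.range r, (x - i)

/-- The degenerate exponential `e_λ^x(t) = ∑_{n≥0} (x)_{n,λ} t^n/n!` as a formal power series. -/
def degExp (lam x : ℝ) : PowerSeries ℝ :=
  PowerSeries.mk fun n => gff lam x n / n.factorial

/-- `egfCoeff f n = a_n` when `f = ∑_{n≥0} a_n t^n/n!`. -/
def egfCoeff (f : PowerSeries ℝ) (n : ℕ) : ℝ := n.factorial * PowerSeries.coeff n f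

/-- The formal binomial power `(1+g)^a = ∑_{k≥0} (a)_k/k! · g^k`,
intended for `g` with zero constant term (so the sum is coefficientwise finite). -/
def binomPow (a : ℝ) (g : PowerSeries ℝ) : PowerSeries ℝ :=
  PowerSeries.mk fun n =>
    ∑ k ∈ Finset.range (n + 1), (ff a k / k.factorial) * PowerSeries.coeff n (g ^ k)

/-- `(2/(e_λ(t)+1))^α`, the `(-α)`-th formal binomial power of `(e_λ(t)+1)/2 = 1 + (e_λ(t)-1)/2`. -/
def eulerGF (lam a : ℝ) : PowerSeries ℝ :=
  binomPow (-a) (PowerSeries.C (1 / 2 : ℝ) * (degExp lam 1 - 1))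

/-- Generalized degenerate Euler-Genocchi polynomials `A^{(r)}_{n,λ}(x)`, defined by
`∑_{n≥0} A^{(r)}_{n,λ}(x) t^n/n! = 2 t^r e_λ^x(t)/(e_λ(t)+1)`. -/
def A (lam : ℝ) (r : ℕ) (x : ℝ) (n : ℕ) : ℝ :=
  egfCoeff (2 * PowerSeries.X ^ r * degExp lam x * (degExp lam 1 + 1)⁻¹) n

/-- Generalized degenerate Euler-Genocchi polynomials of order `α`, `A^{(r,α)}_{n,λ}(x)`,
defined by `∑_{n≥0} A^{(r,α)}_{n,λ}(x) t^n/n! = t^r (2/(e_λ(t)+1))^α e_λ^x(t)`. -/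
def Aa (lam a : ℝ) (r : ℕ) (x : ℝ) (n : ℕ) : ℝ :=
  egfCoeff (PowerSeries.X ^ r * eulerGF lam a * degExp lam x) n

/-- Degenerate Euler polynomials of order `α`:
`∑_{n≥0} E^{(α)}_{n,λ}(x) t^n/n! = (2/(e_λ(t)+1))^α e_λ^x(t)`. -/
def Epoly (lam a x : ℝ) (n : ℕ) : ℝ := egfCoeff (eulerGF lam a * degExp lam x) n

/-- Degenerate Euler polynomials `E_{n,λ}(x)`:
`∑_{n≥0} E_{n,λ}(x) t^n/n! = 2 e_λ^x(t)/(e_λ(t)+1)`. -/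
def E1 (lam x : ℝ) (n : ℕ) : ℝ :=
  egfCoeff (2 * degExp lam x * (degExp lam 1 + 1)⁻¹) n

/-- Degenerate Euler numbers `E_{n,λ}`: `∑_{n≥0} E_{n,λ} t^n/n! = 2/(e_λ(t)+1)`. -/
def Enum (lam : ℝ) (n : ℕ) : ℝ :=
  egfCoeff (2 * (degExp lam 1 + 1)⁻¹) n

/-- Degenerate Stirling numbers of the second kind:
`∑_{n≥k} S_{2,λ}(n,k) t^n/n! = (1/k!)(e_λ(t)-1)^k`. -/
def S2 (lam : ℝ) (n k : ℕ) : ℝ :=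
  egfCoeff (PowerSeries.C (1 / k.factorial : ℝ) * (degExp lam 1 - 1) ^ k) n

/-- Alternating degenerate power sum `T_{k,λ}(n) = ∑_{i=0}^n (-1)^i (i)_{k,λ}`. -/
def T (lam : ℝ) (k n : ℕ) : ℝ := ∑ i ∈ Finset.range (n + 1), (-1 : ℝ) ^ i * gff lam i k

section AuxLemmas

lemma gff_succ' (lam x : ℝ) (n : ℕ) : gff lam x (n+1) = gff lam x n * (x - n * lam) :=
  Finset.prod_range_succ _ _

lemma gff_zero' (lam x : ℝ) : gff lam x 0 = 1 := rfl

lemma gff_vandermonde (lam a b : ℝ) (n : ℕ) :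
    gff lam (a + b) n =
      ∑ i ∈ Finset.range (n+1), (n.choose i : ℝ) * gff lam a i * gff lam b (n - i) := by
  induction n with
  | zero => simp [gff]
  | succ n ih =>
    rw [gff_succ', ih, Finset.sum_mul]
    have key : ∀ i ∈ Finset.range (n+1),
        (n.choose i : ℝ) * gff lam a i * gff lam b (n - i) * (a + b - n*lam)
        = (n.choose i : ℝ) * gff lam a (i+1) * gff lam b (n - i)
          + (n.choose i : ℝ) * gff lam a i * gff lam b (n - i + 1) := by
      intro i hi
      have hi' : i ≤ n := Nat.lt_succ_iff.mp (Finset.mem_range.mp hi)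
      rw [gff_succ', gff_succ', Nat.cast_sub hi']
      ring
    rw [Finset.sum_congr rfl key, Finset.sum_add_distrib]
    have hS2 : (∑ i ∈ Finset.range (n+1), (n.choose i : ℝ) * gff lam a i * gff lam b (n - i + 1))
        = (∑ i ∈ Finset.range (n+1), (n.choose (i+1) : ℝ) * gff lam a (i+1) * gff lam b (n - i))
          + gff lam b (n+1) := by
      rw [Finset.sum_range_succ' (fun i => (n.choose i : ℝ) * gff lam a i * gff lam b (n - i + 1))]
      simp only [Nat.choose_zero_right, Nat.cast_one, gff_zero', Nat.sub_zero, one_mul, mul_one]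
      congr 1
      rw [Finset.sum_range_succ, Nat.choose_succ_self, Nat.cast_zero, zero_mul, zero_mul, add_zero]
      refine Finset.sum_congr rfl fun i hi => ?_
      have : n - (i+1) + 1 = n - i := by
        have := Finset.mem_range.mp hi; omega
      rw [this]
    rw [hS2, ← add_assoc, ← Finset.sum_add_distrib]
    rw [Finset.sum_range_succ' (fun i => (((n+1).choose i : ℝ)) * gff lam a i * gff lam b (n + 1 - i))]
    simp only [Nat.succ_sub_succ, Nat.choose_zero_right, Nat.cast_one, gff_zero', one_mul,
      Nat.sub_zero]
    congr 1
    refine Finset.sum_congr rfl fun i hi => ?_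
    rw [Nat.choose_succ_succ, Nat.cast_add]
    ring

lemma degExp_mul (lam a b : ℝ) : degExp lam a * degExp lam b = degExp lam (a + b) := by
  ext n
  rw [PowerSeries.coeff_mul, Finset.Nat.sum_antidiagonal_eq_sum_range_succ_mk]
  simp only [degExp, PowerSeries.coeff_mk]
  rw [gff_vandermonde, Finset.sum_div]
  refine Finset.sum_congr rfl fun i hi => ?_
  have hi' : i ≤ n := Nat.lt_succ_iff.mp (Finset.mem_range.mp hi)
  have h := Nat.choose_mul_factorial_mul_factorial hi'
  have hne : (n.factorial : ℝ) ≠ 0 := Nat.cast_ne_zero.mpr n.factorial_ne_zero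
  have hi0 : (i.factorial : ℝ) ≠ 0 := Nat.cast_ne_zero.mpr i.factorial_ne_zero
  have hni0 : ((n-i).factorial : ℝ) ≠ 0 := Nat.cast_ne_zero.mpr (n-i).factorial_ne_zero
  field_simp
  rw [← h]
  push_cast
  ring

lemma gff_zero_left (lam : ℝ) (n : ℕ) (hn : 0 < n) : gff lam 0 n = 0 := by
  apply Finset.prod_eq_zero (Finset.mem_range.mpr hn)
  simp

lemma degExp_zero (lam : ℝ) : degExp lam 0 = 1 := by
  ext n
  simp only [degExp, PowerSeries.coeff_mk, PowerSeries.coeff_one]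
  rcases Nat.eq_zero_or_pos n with h | h
  · subst h; simp [gff]
  · rw [gff_zero_left lam n h, if_neg (Nat.pos_iff_ne_zero.mp h)]
    simp

lemma degExp_pow (lam : ℝ) (k : ℕ) : degExp lam 1 ^ k = degExp lam (k : ℝ) := by
  induction k with
  | zero => simp [degExp_zero]
  | succ k ih => rw [pow_succ, ih, degExp_mul]; push_cast; ring_nf

lemma ff_nat (m k : ℕ) : ff (m : ℝ) k = (m.descFactorial k : ℝ) := by
  rcases le_or_gt k m with h | h
  · rw [Nat.descFactorial_eq_prod_range, Nat.cast_prod, ff]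
    refine Finset.prod_congr rfl fun i hi => ?_
    have : i ≤ m := le_trans (le_of_lt (Finset.mem_range.mp hi)) h
    rw [Nat.cast_sub this]
  · rw [Nat.descFactorial_eq_zero_iff_lt.mpr h, Nat.cast_zero, ff]
    apply Finset.prod_eq_zero (Finset.mem_range.mpr h)
    simp

lemma ff_div_factorial (m k : ℕ) : ff (m : ℝ) k / (k.factorial : ℝ) = (m.choose k : ℝ) := by
  rw [ff_nat, Nat.descFactorial_eq_factorial_mul_choose]
  push_cast
  rw [mul_comm, mul_div_assoc, div_self (Nat.cast_ne_zero.mpr k.factorial_ne_zero), mul_one]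

lemma ff_eq_factorial_div (n r : ℕ) (h : r ≤ n) :
    ff (n : ℝ) r = (n.factorial : ℝ) / ((n - r).factorial : ℝ) := by
  rw [ff_nat, eq_div_iff (Nat.cast_ne_zero.mpr (n-r).factorial_ne_zero), ← Nat.cast_mul,
    mul_comm, Nat.factorial_mul_descFactorial h]

lemma coeff_pow_eq_zero {g : PowerSeries ℝ} (hg : PowerSeries.constantCoeff g = 0)
    {n k : ℕ} (h : n < k) : PowerSeries.coeff n (g ^ k) = 0 := by
  have hdvd : (PowerSeries.X : PowerSeries ℝ) ^ k ∣ g ^ k :=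
    pow_dvd_pow_of_dvd (PowerSeries.X_dvd_iff.mpr hg) k
  exact (PowerSeries.X_pow_dvd_iff.mp hdvd) n h

lemma binomPow_nat (m : ℕ) (g : PowerSeries ℝ) (hg : PowerSeries.constantCoeff g = 0) :
    binomPow (m : ℝ) g = (1 + g) ^ m := by
  ext n
  have hL : PowerSeries.coeff n (binomPow (m : ℝ) g)
      = ∑ k ∈ Finset.range (n + m + 1), (m.choose k : ℝ) * PowerSeries.coeff n (g ^ k) := by
    rw [binomPow, PowerSeries.coeff_mk]
    rw [Finset.sum_subset (Finset.range_subset_range.mpr (by omega : n + 1 ≤ n + m + 1))]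
    · exact Finset.sum_congr rfl fun k _ => by rw [ff_div_factorial]
    · intro k _ hk
      have : n < k := by
        by_contra h
        exact hk (Finset.mem_range.mpr (by omega))
      rw [coeff_pow_eq_zero hg this, mul_zero]
  have hR : PowerSeries.coeff n ((1 + g) ^ m)
      = ∑ k ∈ Finset.range (n + m + 1), (m.choose k : ℝ) * PowerSeries.coeff n (g ^ k) := by
    rw [add_comm (1 : PowerSeries ℝ) g, add_pow, map_sum]
    rw [Finset.sum_subset (Finset.range_subset_range.mpr (by omega : m + 1 ≤ n + m + 1))]
    · refine Finset.sum_congr rfl fun k _ => ?_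
      rw [one_pow, mul_one, ← map_natCast (PowerSeries.C (R := ℝ)) (m.choose k),
        PowerSeries.coeff_mul_C, mul_comm]
    · intro k _ hk
      have : m < k := by
        by_contra h
        exact hk (Finset.mem_range.mpr (by omega))
      rw [Nat.choose_eq_zero_of_lt this]
      simp
  rw [hL, hR]

lemma eulerGF_neg_nat (lam : ℝ) (m : ℕ) :
    eulerGF lam (-(m : ℝ)) = PowerSeries.C ((1/2 : ℝ)^m) * (degExp lam 1 + 1) ^ m := by
  have hg0 : PowerSeries.constantCoeff (PowerSeries.C (1/2 : ℝ) * (degExp lam 1 - 1)) = 0 := by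
    simp [degExp, gff]
  rw [eulerGF, neg_neg, binomPow_nat m _ hg0]
  have hC : (1 : PowerSeries ℝ) + PowerSeries.C (1/2 : ℝ) * (degExp lam 1 - 1)
      = PowerSeries.C (1/2 : ℝ) * (degExp lam 1 + 1) := by
    have h2 : (PowerSeries.C (1/2 : ℝ)) * 2 = 1 := by
      rw [← map_ofNat (PowerSeries.C (R := ℝ)) 2, ← map_mul]
      norm_num
    linear_combination -h2
  rw [hC, mul_pow, ← map_pow]

end AuxLemmas

/-- Theorem 3 of the paper: for `m ∈ ℕ`, `m ≥ 1`, and `n ≥ r ≥ 0`,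
`A^{(r,-m)}_{n,λ}(x) = ((n)_r/2^m) ∑_{k=0}^m C(m,k) (k+x)_{n-r,λ}`. -/
theorem Aa_neg_order (lam : ℝ) (hlam : lam ≠ 0) (x : ℝ) (m : ℕ) (hm : 0 < m)
    (n r : ℕ) (hnr : r ≤ n) :
    Aa lam (-(m : ℝ)) r x n =
      (ff (n : ℝ) r / 2 ^ m) *
        ∑ k ∈ Finset.range (m + 1), (m.choose k : ℝ) * gff lam ((k : ℝ) + x) (n - r) := by
  obtain ⟨d, rfl⟩ : ∃ d, n = d + r := ⟨n - r, (Nat.sub_add_cancel hnr).symm⟩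
  simp only [Nat.add_sub_cancel]
  have hG : eulerGF lam (-(m : ℝ)) * degExp lam x
      = PowerSeries.C ((1/2 : ℝ)^m) *
          ∑ k ∈ Finset.range (m + 1),
            (m.choose k : PowerSeries ℝ) * degExp lam ((k : ℝ) + x) := by
    rw [eulerGF_neg_nat, mul_assoc]
    congr 1
    rw [add_pow, Finset.sum_mul]
    refine Finset.sum_congr rfl fun k _ => ?_
    rw [one_pow, mul_one, degExp_pow, mul_comm (degExp lam (k:ℝ)) _, mul_assoc, degExp_mul]
  rw [Aa, egfCoeff, mul_assoc, hG]
  rw [PowerSeries.coeff_X_pow_mul, PowerSeries.coeff_C_mul, map_sum]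
  have hterm : ∀ k ∈ Finset.range (m+1),
      PowerSeries.coeff d ((m.choose k : PowerSeries ℝ) * degExp lam ((k : ℝ) + x))
      = (m.choose k : ℝ) * (gff lam ((k:ℝ) + x) d / (d.factorial : ℝ)) := by
    intro k _
    rw [← map_natCast (PowerSeries.C (R := ℝ)) (m.choose k), PowerSeries.coeff_C_mul]
    simp [degExp]
  rw [Finset.sum_congr rfl hterm, ff_eq_factorial_div (d + r) r hnr]
  simp only [Nat.add_sub_cancel]
  rw [Finset.mul_sum, Finset.mul_sum, Finset.mul_sum]
  refine Finset.sum_congr rfl fun k _ => ?_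
  have h1 : ((d).factorial : ℝ) ≠ 0 := Nat.cast_ne_zero.mpr (d).factorial_ne_zero
  have h2 : ((2:ℝ))^m ≠ 0 := by positivity
  field_simp
  have h3 : ((1:ℝ)/2)^m * 2^m = 1 := by rw [← mul_pow]; norm_num
  linear_combination ((m.choose k : ℝ) * gff lam ((k:ℝ) + x) d) * h3
end
end

section
/- For every odd positive integer m, all integers n ≥ 0, r ≥ 0, and any nonzero α, one has ∑_{k=0}^{m−1} (−1)^k · A^{(r,α)}_{n,λ}((x+k)/m) = ∑_{l=0}^{n} C(n,l) · A^{(r)}_{l,mλ}(x) · m^{r−l} · E^{(α−1)}_{n−l,λ}, where E^{(α−1)}_{j,λ} are the degenerate Euler numbers of order α−1. -/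
open Finset

noncomputable section

namespace AltSumAux

open PowerSeries

lemma gff_succ (lam x : ℝ) (n : ℕ) : gff lam x (n + 1) = gff lam x n * (x - n * lam) := by
  simp [gff, Finset.prod_range_succ]

lemma gff_zero_left (lam : ℝ) {n : ℕ} (hn : n ≠ 0) : gff lam 0 n = 0 := by
  refine Finset.prod_eq_zero (Finset.mem_range.2 (Nat.pos_of_ne_zero hn)) ?_
  simp

lemma gff_add (lam x y : ℝ) (n : ℕ) :
    gff lam (x + y) n =
      ∑ k ∈ Finset.range (n + 1), (n.choose k : ℝ) * gff lam x k * gff lam y (n - k) := by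
  induction n with
  | zero => simp [gff]
  | succ n ih =>
    rw [gff_succ, ih, Finset.sum_mul]
    have key : ∀ k ∈ Finset.range (n + 1),
        (n.choose k : ℝ) * gff lam x k * gff lam y (n - k) * (x + y - n * lam)
          = (n.choose k : ℝ) * gff lam x (k + 1) * gff lam y (n - k)
            + (n.choose k : ℝ) * gff lam x k * gff lam y (n - k + 1) := by
      intro k hk
      have hk' : k ≤ n := Nat.lt_succ_iff.mp (Finset.mem_range.mp hk)
      have hcast : ((n - k : ℕ) : ℝ) = (n : ℝ) - k := by
        rw [Nat.cast_sub hk']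
      have hsplit : x + y - (n : ℝ) * lam
          = (x - k * lam) + (y - ((n - k : ℕ) : ℝ) * lam) := by
        rw [hcast]; ring
      rw [hsplit, mul_add, gff_succ, gff_succ]
      ring
    rw [Finset.sum_congr rfl key, Finset.sum_add_distrib]
    have hA : ∑ k ∈ Finset.range (n + 1),
        (n.choose k : ℝ) * gff lam x (k + 1) * gff lam y (n - k)
        = ∑ k ∈ Finset.range (n + 1),
            (n.choose k : ℝ) * gff lam x (k + 1) * gff lam y (n + 1 - (k + 1)) := by
      refine Finset.sum_congr rfl fun k hk => ?_
      congr 2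
      omega
    have hB : ∑ k ∈ Finset.range (n + 1),
        (n.choose k : ℝ) * gff lam x k * gff lam y (n - k + 1)
        = ∑ k ∈ Finset.range (n + 1),
            (n.choose k : ℝ) * gff lam x k * gff lam y (n + 1 - k) := by
      refine Finset.sum_congr rfl fun k hk => ?_
      have hk' : k ≤ n := Nat.lt_succ_iff.mp (Finset.mem_range.mp hk)
      rw [Nat.sub_add_comm hk']
    rw [hA, hB]
    rw [Finset.sum_range_succ' (fun k => ((n + 1).choose k : ℝ) * gff lam x k * gff lam y (n + 1 - k)) (n + 1)]
    have hsplitc : ∀ k ∈ Finset.range (n + 1),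
        (((n + 1).choose (k + 1) : ℝ)) * gff lam x (k + 1) * gff lam y (n + 1 - (k + 1))
          = (n.choose k : ℝ) * gff lam x (k + 1) * gff lam y (n + 1 - (k + 1))
            + (n.choose (k + 1) : ℝ) * gff lam x (k + 1) * gff lam y (n - k) := by
      intro k hk
      have : (n + 1).choose (k + 1) = n.choose k + n.choose (k + 1) := Nat.choose_succ_succ n k
      have h2 : n + 1 - (k + 1) = n - k := by omega
      rw [this, h2]
      push_cast
      ring
    rw [Finset.sum_congr rfl hsplitc, Finset.sum_add_distrib]
    have hlast : ∑ k ∈ Finset.range (n + 1),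
        (n.choose (k + 1) : ℝ) * gff lam x (k + 1) * gff lam y (n - k)
          + ((n + 1).choose 0 : ℝ) * gff lam x 0 * gff lam y (n + 1 - 0)
        = ∑ k ∈ Finset.range (n + 1),
            (n.choose k : ℝ) * gff lam x k * gff lam y (n + 1 - k) := by
      rw [Finset.sum_range_succ' (fun k => (n.choose k : ℝ) * gff lam x k * gff lam y (n + 1 - k)) n]
      congr 1
      · rw [Finset.sum_range_succ]
        simp only [Nat.choose_succ_self, Nat.cast_zero, zero_mul]
        rw [add_zero]
        refine Finset.sum_congr rfl fun k hk => ?_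
        have hk' : k < n := Finset.mem_range.mp hk
        have : n + 1 - (k + 1) = n - k := by omega
        rw [this]
      · simp
    rw [add_assoc, hlast]

lemma constantCoeff_degExp (lam x : ℝ) : constantCoeff (degExp lam x) = 1 := by
  have := PowerSeries.coeff_mk 0 (fun n => gff lam x n / (n.factorial : ℝ))
  simpa [degExp, gff, ← PowerSeries.coeff_zero_eq_constantCoeff] using this

lemma coeff_mul_range (f h : PowerSeries ℝ) (n : ℕ) :
    PowerSeries.coeff n (f * h)
      = ∑ i ∈ Finset.range (n + 1), PowerSeries.coeff i f * PowerSeries.coeff (n - i) h := by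
  rw [PowerSeries.coeff_mul, Finset.Nat.sum_antidiagonal_eq_sum_range_succ_mk]

lemma degExp_mul (lam x y : ℝ) : degExp lam x * degExp lam y = degExp lam (x + y) := by
  ext n
  rw [coeff_mul_range]
  simp only [degExp, PowerSeries.coeff_mk]
  rw [gff_add, Finset.sum_div]
  refine Finset.sum_congr rfl fun k hk => ?_
  have hk' : k ≤ n := Nat.lt_succ_iff.mp (Finset.mem_range.mp hk)
  rw [Nat.cast_choose ℝ hk']
  have h1 : (k.factorial : ℝ) ≠ 0 := Nat.cast_ne_zero.2 (Nat.factorial_ne_zero _)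
  have h2 : ((n - k).factorial : ℝ) ≠ 0 := Nat.cast_ne_zero.2 (Nat.factorial_ne_zero _)
  have h3 : (n.factorial : ℝ) ≠ 0 := Nat.cast_ne_zero.2 (Nat.factorial_ne_zero _)
  field_simp

lemma degExp_zero (lam : ℝ) : degExp lam 0 = 1 := by
  ext n
  cases n with
  | zero => simp [degExp, gff]
  | succ n =>
    simp [degExp, gff_zero_left lam (Nat.succ_ne_zero n)]

lemma degExp_pow (lam z : ℝ) (k : ℕ) : degExp lam z ^ k = degExp lam (k * z) := by
  induction k with
  | zero => simp [degExp_zero]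
  | succ k ih =>
    rw [pow_succ, ih, degExp_mul]
    push_cast
    ring_nf

lemma gff_smul (lam x c : ℝ) (n : ℕ) : gff (c * lam) (c * x) n = c ^ n * gff lam x n := by
  unfold gff
  calc ∏ i ∈ Finset.range n, (c * x - ↑i * (c * lam))
      = ∏ i ∈ Finset.range n, (c * (x - ↑i * lam)) :=
        Finset.prod_congr rfl fun i _ => by ring
    _ = c ^ n * ∏ i ∈ Finset.range n, (x - ↑i * lam) := by
        rw [Finset.prod_mul_distrib, Finset.prod_const, Finset.card_range]

lemma rescale_degExp {m : ℝ} (hm : m ≠ 0) (lam y : ℝ) :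
    rescale (1 / m) (degExp (m * lam) y) = degExp lam (y / m) := by
  ext n
  rw [PowerSeries.coeff_rescale]
  simp only [degExp, PowerSeries.coeff_mk]
  have : gff (m * lam) y n = m ^ n * gff lam (y / m) n := by
    have := gff_smul lam (y / m) m n
    rwa [mul_div_cancel₀ _ hm] at this
  rw [this]
  field_simp
  rw [← mul_pow, one_div_mul_cancel hm, one_pow, one_mul]

lemma coeff_pow_eq_zero {g : PowerSeries ℝ} (hg : constantCoeff g = 0)
    {k n : ℕ} (h : n < k) : PowerSeries.coeff n (g ^ k) = 0 := by
  obtain ⟨h', rfl⟩ := PowerSeries.X_dvd_iff.2 hg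
  rw [mul_pow, PowerSeries.coeff_mul]
  refine Finset.sum_eq_zero fun p hp => ?_
  rw [Finset.HasAntidiagonal.mem_antidiagonal] at hp
  rw [PowerSeries.coeff_X_pow]
  have : p.1 ≠ k := by omega
  simp [this]

lemma ff_eq_gff (x : ℝ) (n : ℕ) : ff x n = gff 1 x n := by
  unfold ff gff
  refine Finset.prod_congr rfl fun i _ => ?_
  rw [mul_one]

lemma ff_add (a b : ℝ) (s : ℕ) :
    ff (a + b) s = ∑ k ∈ Finset.range (s + 1), (s.choose k : ℝ) * ff a k * ff b (s - k) := by
  simp only [ff_eq_gff]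
  exact gff_add 1 a b s


lemma binomPow_mul {g : PowerSeries ℝ} (hg : constantCoeff g = 0) (a b : ℝ) :
    binomPow a g * binomPow b g = binomPow (a + b) g := by
  ext n
  rw [coeff_mul_range]
  simp only [binomPow, PowerSeries.coeff_mk]
  have hext : ∀ (c : ℝ) (i : ℕ), i ≤ n →
      ∑ k ∈ Finset.range (i + 1), ff c k / (k.factorial : ℝ) * PowerSeries.coeff i (g ^ k)
        = ∑ k ∈ Finset.range (n + 1), ff c k / (k.factorial : ℝ) * PowerSeries.coeff i (g ^ k) := by
    intro c i hi
    refine Finset.sum_subset ?_ ?_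
    · exact Finset.range_subset_range.2 (by omega)
    · intro k hk hk'
      have : i < k := by
        simp only [Finset.mem_range] at hk hk' ⊢
        omega
      rw [coeff_pow_eq_zero hg this, mul_zero]
  -- LHS
  have lhs_eq : ∑ i ∈ Finset.range (n + 1),
      (∑ k ∈ Finset.range (i + 1), ff a k / (k.factorial : ℝ) * PowerSeries.coeff i (g ^ k)) *
        ∑ l ∈ Finset.range (n - i + 1), ff b l / (l.factorial : ℝ) * PowerSeries.coeff (n - i) (g ^ l)
      = ∑ k ∈ Finset.range (n + 1), ∑ l ∈ Finset.range (n + 1),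
          (ff a k / (k.factorial : ℝ)) * (ff b l / (l.factorial : ℝ)) *
            PowerSeries.coeff n (g ^ (k + l)) := by
    have step1 : ∀ i ∈ Finset.range (n + 1),
        (∑ k ∈ Finset.range (i + 1), ff a k / (k.factorial : ℝ) * PowerSeries.coeff i (g ^ k)) *
          ∑ l ∈ Finset.range (n - i + 1), ff b l / (l.factorial : ℝ) * PowerSeries.coeff (n - i) (g ^ l)
        = ∑ k ∈ Finset.range (n + 1), ∑ l ∈ Finset.range (n + 1),
            (ff a k / (k.factorial : ℝ)) * (ff b l / (l.factorial : ℝ)) *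
              (PowerSeries.coeff i (g ^ k) * PowerSeries.coeff (n - i) (g ^ l)) := by
      intro i hi
      have hi' : i ≤ n := Nat.lt_succ_iff.mp (Finset.mem_range.mp hi)
      rw [hext a i hi', hext b (n - i) (by omega), Finset.sum_mul_sum]
      refine Finset.sum_congr rfl fun k _ => Finset.sum_congr rfl fun l _ => ?_
      ring
    rw [Finset.sum_congr rfl step1, Finset.sum_comm]
    refine Finset.sum_congr rfl fun k _ => ?_
    rw [Finset.sum_comm]
    refine Finset.sum_congr rfl fun l _ => ?_
    rw [← Finset.mul_sum, pow_add, coeff_mul_range]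
  rw [lhs_eq]
  -- RHS
  have hconv : ∀ s : ℕ, ff (a + b) s / (s.factorial : ℝ)
      = ∑ k ∈ Finset.range (s + 1),
          (ff a k / (k.factorial : ℝ)) * (ff b (s - k) / ((s - k).factorial : ℝ)) := by
    intro s
    rw [ff_add, Finset.sum_div]
    refine Finset.sum_congr rfl fun k hk => ?_
    have hk' : k ≤ s := Nat.lt_succ_iff.mp (Finset.mem_range.mp hk)
    rw [Nat.cast_choose ℝ hk']
    have h1 : (k.factorial : ℝ) ≠ 0 := Nat.cast_ne_zero.2 (Nat.factorial_ne_zero _)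
    have h2 : ((s - k).factorial : ℝ) ≠ 0 := Nat.cast_ne_zero.2 (Nat.factorial_ne_zero _)
    have h3 : (s.factorial : ℝ) ≠ 0 := Nat.cast_ne_zero.2 (Nat.factorial_ne_zero _)
    field_simp
  have rhs_eq : ∑ s ∈ Finset.range (n + 1), ff (a + b) s / (s.factorial : ℝ) * PowerSeries.coeff n (g ^ s)
      = ∑ k ∈ Finset.range (n + 1), ∑ l ∈ Finset.range (n + 1),
          (ff a k / (k.factorial : ℝ)) * (ff b l / (l.factorial : ℝ)) *
            PowerSeries.coeff n (g ^ (k + l)) := by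
    have step : ∀ s ∈ Finset.range (n + 1),
        ff (a + b) s / (s.factorial : ℝ) * PowerSeries.coeff n (g ^ s)
        = ∑ k ∈ Finset.range (s + 1),
            (ff a k / (k.factorial : ℝ)) * (ff b (s - k) / ((s - k).factorial : ℝ)) *
              PowerSeries.coeff n (g ^ (k + (s - k))) := by
      intro s hs
      rw [hconv, Finset.sum_mul]
      refine Finset.sum_congr rfl fun k hk => ?_
      have hk' : k ≤ s := Nat.lt_succ_iff.mp (Finset.mem_range.mp hk)
      rw [Nat.add_sub_cancel' hk']
    rw [Finset.sum_congr rfl step,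
      Finset.sum_range_diag_flip (n + 1)
        (fun k l => (ff a k / (k.factorial : ℝ)) * (ff b l / (l.factorial : ℝ)) *
          PowerSeries.coeff n (g ^ (k + l)))]
    refine Finset.sum_congr rfl fun k hk => ?_
    refine Finset.sum_subset ?_ ?_
    · exact Finset.range_subset_range.2 (by omega)
    · intro l hl hl'
      have hkn : k ≤ n := Nat.lt_succ_iff.mp (Finset.mem_range.mp hk)
      have : n < k + l := by
        simp only [Finset.mem_range] at hl hl'
        omega
      rw [coeff_pow_eq_zero hg this, mul_zero]
  rw [rhs_eq]

lemma ff_zero_left {k : ℕ} (hk : k ≠ 0) : ff (0 : ℝ) k = 0 := by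
  refine Finset.prod_eq_zero (Finset.mem_range.2 (Nat.pos_of_ne_zero hk)) ?_
  simp

lemma binomPow_zero (g : PowerSeries ℝ) : binomPow 0 g = 1 := by
  ext n
  simp only [binomPow, PowerSeries.coeff_mk]
  rw [Finset.sum_eq_single 0]
  · simp [ff]
  · intro k _ hk
    rw [ff_zero_left hk]
    simp
  · intro h
    exact absurd (Finset.mem_range.2 (by omega)) h

lemma ff_one {k : ℕ} (hk : 2 ≤ k) : ff (1 : ℝ) k = 0 := by
  refine Finset.prod_eq_zero (Finset.mem_range.2 (by omega : 1 < k)) ?_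
  simp

lemma binomPow_one {g : PowerSeries ℝ} (hg : constantCoeff g = 0) :
    binomPow 1 g = 1 + g := by
  ext n
  simp only [binomPow, PowerSeries.coeff_mk, map_add]
  cases n with
  | zero =>
    simp [ff, PowerSeries.coeff_zero_eq_constantCoeff, hg]
  | succ n =>
    rw [Finset.sum_eq_single 1]
    · simp [ff]
    · intro k hk hk1
      rcases Nat.lt_or_ge k 2 with h2 | h2
      · interval_cases k
        · simp [PowerSeries.coeff_one]
        · exact absurd rfl hk1
      · rw [ff_one h2]; simp
    · intro h
      exact absurd (Finset.mem_range.2 (by omega)) h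

lemma constantCoeff_g0 (lam : ℝ) :
    constantCoeff (PowerSeries.C (R := ℝ) (1 / 2) * (degExp lam 1 - 1)) = 0 := by
  simp [map_mul, map_sub, constantCoeff_degExp]

lemma two_eq_C : (2 : PowerSeries ℝ) = PowerSeries.C (R := ℝ) 2 := by
  rw [← map_ofNat (PowerSeries.C (R := ℝ)) 2]

lemma eulerGF_one_mul (lam : ℝ) : eulerGF lam 1 * (degExp lam 1 + 1) = 2 := by
  have hC : PowerSeries.C (R := ℝ) (1 / 2) * 2 = 1 := by
    rw [two_eq_C, ← map_mul]
    norm_num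
  have h1 : binomPow 1 (PowerSeries.C (R := ℝ) (1 / 2) * (degExp lam 1 - 1))
      = PowerSeries.C (R := ℝ) (1 / 2) * (degExp lam 1 + 1) := by
    rw [binomPow_one (constantCoeff_g0 lam)]
    linear_combination -(hC)
  have h2 : eulerGF lam 1 * (PowerSeries.C (R := ℝ) (1 / 2) * (degExp lam 1 + 1)) = 1 := by
    rw [← h1]
    unfold eulerGF
    rw [binomPow_mul (constantCoeff_g0 lam), neg_add_cancel, binomPow_zero]
  linear_combination 2 * h2 - eulerGF lam 1 * (degExp lam 1 + 1) * hC

lemma eulerGF_split (lam a : ℝ) : eulerGF lam a = eulerGF lam (a - 1) * eulerGF lam 1 := by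
  unfold eulerGF
  rw [binomPow_mul (constantCoeff_g0 lam)]
  congr 1
  ring

lemma egfCoeff_mul (f g : PowerSeries ℝ) (n : ℕ) :
    egfCoeff (f * g) n = ∑ l ∈ Finset.range (n + 1),
      (n.choose l : ℝ) * egfCoeff f l * egfCoeff g (n - l) := by
  unfold egfCoeff
  rw [coeff_mul_range, Finset.mul_sum]
  refine Finset.sum_congr rfl fun l hl => ?_
  have hl' : l ≤ n := Nat.lt_succ_iff.mp (Finset.mem_range.mp hl)
  rw [Nat.cast_choose ℝ hl']
  have h1 : (l.factorial : ℝ) ≠ 0 := Nat.cast_ne_zero.2 (Nat.factorial_ne_zero _)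
  have h2 : ((n - l).factorial : ℝ) ≠ 0 := Nat.cast_ne_zero.2 (Nat.factorial_ne_zero _)
  have h3 : (n.factorial : ℝ) ≠ 0 := Nat.cast_ne_zero.2 (Nat.factorial_ne_zero _)
  field_simp

end AltSumAux

/-- Theorem 8 of the paper: for odd `m ∈ ℕ`, `m ≥ 1`, `n, r ≥ 0`, nonzero `α`,
`∑_{k=0}^{m-1} (-1)^k A^{(r,α)}_{n,λ}((x+k)/m) = ∑_{l=0}^n C(n,l) A^{(r)}_{l,mλ}(x) m^{r-l} E^{(α-1)}_{n-l,λ}`. -/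
theorem alt_sum_Aa (lam : ℝ) (hlam : lam ≠ 0) (a : ℝ) (ha : a ≠ 0) (x : ℝ)
    (m : ℕ) (hm : 0 < m) (hodd : Odd m) (n r : ℕ) :
    ∑ k ∈ Finset.range m, (-1 : ℝ) ^ k * Aa lam a r ((x + k) / m) n =
      ∑ l ∈ Finset.range (n + 1),
        (n.choose l : ℝ) * A (m * lam) r x l * (m : ℝ) ^ ((r : ℤ) - (l : ℤ)) *
          egfCoeff (eulerGF lam (a - 1)) (n - l) := by
  have hmR : (m : ℝ) ≠ 0 := Nat.cast_ne_zero.2 hm.ne'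
  set μ : ℝ := (m : ℝ) * lam with hμ
  set u : PowerSeries ℝ := PowerSeries.rescale (1 / (m : ℝ)) (degExp μ 1) with hu
  set Dx : PowerSeries ℝ := PowerSeries.rescale (1 / (m : ℝ)) (degExp μ x) with hDx
  set G : PowerSeries ℝ := ∑ k ∈ Finset.range m, (-u) ^ k with hG
  have hcu : PowerSeries.constantCoeff u = 1 := by
    rw [hu, ← PowerSeries.coeff_zero_eq_constantCoeff, PowerSeries.coeff_rescale]
    simp [degExp, gff]
  have hc1u : PowerSeries.constantCoeff (1 + u) ≠ 0 := by
    rw [map_add, map_one, hcu]; norm_num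
  have hv : PowerSeries.constantCoeff (degExp μ 1 + 1) ≠ 0 := by
    rw [map_add, map_one, AltSumAux.constantCoeff_degExp]; norm_num
  have hD : ∀ k : ℕ, degExp lam ((x + k) / m) = Dx * u ^ k := by
    intro k
    have h1 : degExp lam ((x + k) / m)
        = PowerSeries.rescale (1 / (m : ℝ)) (degExp μ (x + k)) :=
      (AltSumAux.rescale_degExp hmR lam (x + k)).symm
    have h2 : degExp μ (x + k) = degExp μ x * degExp μ 1 ^ k := by
      rw [AltSumAux.degExp_pow, mul_one, AltSumAux.degExp_mul]
    rw [h1, h2, map_mul, map_pow, hu, hDx]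
  have hum : u ^ m = degExp lam 1 := by
    rw [hu, ← map_pow, AltSumAux.degExp_pow, mul_one, AltSumAux.rescale_degExp hmR,
      div_self hmR]
  have hGu : (1 + u) * G = 1 + degExp lam 1 := by
    have hgs := mul_geom_sum (-u) m
    rw [hodd.neg_pow, hum] at hgs
    rw [hG]
    linear_combination -hgs
  have hE1G : eulerGF lam 1 * G = 2 * (1 + u)⁻¹ := by
    have h1 : eulerGF lam 1 * G * (1 + u) = 2 := by
      calc eulerGF lam 1 * G * (1 + u) = eulerGF lam 1 * ((1 + u) * G) := by ring
        _ = eulerGF lam 1 * (1 + degExp lam 1) := by rw [hGu]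
        _ = 2 := by rw [add_comm]; exact AltSumAux.eulerGF_one_mul lam
    have h2 := PowerSeries.mul_inv_cancel (1 + u) hc1u
    calc eulerGF lam 1 * G = eulerGF lam 1 * G * ((1 + u) * (1 + u)⁻¹) := by
          rw [h2, mul_one]
      _ = eulerGF lam 1 * G * (1 + u) * (1 + u)⁻¹ := by ring
      _ = 2 * (1 + u)⁻¹ := by rw [h1]
  have hrinv : PowerSeries.rescale (1 / (m : ℝ)) ((degExp μ 1 + 1)⁻¹) = (u + 1)⁻¹ := by
    rw [PowerSeries.eq_inv_iff_mul_eq_one]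
    · have h3 : (u + 1 : PowerSeries ℝ)
          = PowerSeries.rescale (1 / (m : ℝ)) (degExp μ 1 + 1) := by
        rw [map_add, map_one, hu]
      rw [h3, ← map_mul, PowerSeries.inv_mul_cancel _ hv, map_one]
    · rw [map_add, map_one, hcu]; norm_num
  have hGF : PowerSeries.X ^ r * eulerGF lam a * (Dx * G)
      = PowerSeries.C (R := ℝ) ((m : ℝ) ^ r) * (eulerGF lam (a - 1) *
          PowerSeries.rescale (1 / (m : ℝ))
            (2 * PowerSeries.X ^ r * degExp μ x * (degExp μ 1 + 1)⁻¹)) := by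
    have hCC : PowerSeries.C (R := ℝ) ((m : ℝ) ^ r) * PowerSeries.C (R := ℝ) (1 / (m : ℝ)) ^ r = 1 := by
      rw [← map_pow, ← map_mul, ← mul_pow, mul_one_div, div_self hmR, one_pow, map_one]
    have hcomm : (u + 1 : PowerSeries ℝ)⁻¹ = (1 + u)⁻¹ := by rw [add_comm]
    calc PowerSeries.X ^ r * eulerGF lam a * (Dx * G)
        = PowerSeries.X ^ r * eulerGF lam (a - 1) * Dx * (eulerGF lam 1 * G) := by
          rw [AltSumAux.eulerGF_split lam a]; ring
      _ = PowerSeries.X ^ r * eulerGF lam (a - 1) * Dx * (2 * (1 + u)⁻¹) := by rw [hE1G]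
      _ = PowerSeries.C (R := ℝ) ((m : ℝ) ^ r) * (eulerGF lam (a - 1) *
            PowerSeries.rescale (1 / (m : ℝ))
              (2 * PowerSeries.X ^ r * degExp μ x * (degExp μ 1 + 1)⁻¹)) := by
          have hXr : PowerSeries.rescale (1 / (m : ℝ)) (PowerSeries.X ^ r)
              = PowerSeries.C (R := ℝ) (1 / (m : ℝ)) ^ r * PowerSeries.X ^ r := by
            rw [map_pow, PowerSeries.rescale_X, mul_pow]
          rw [map_mul, map_mul, map_mul, hrinv, hcomm, map_ofNat, ← hDx, hXr]
          linear_combination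
            (-(2 * eulerGF lam (a - 1) * PowerSeries.X ^ r * Dx * (1 + u)⁻¹)) * hCC
  have hL : ∑ k ∈ Finset.range m, (-1 : ℝ) ^ k * Aa lam a r ((x + k) / m) n
      = egfCoeff (PowerSeries.X ^ r * eulerGF lam a * (Dx * G)) n := by
    have hexp : PowerSeries.X ^ r * eulerGF lam a * (Dx * G)
        = ∑ k ∈ Finset.range m, PowerSeries.C (R := ℝ) ((-1 : ℝ) ^ k) *
            (PowerSeries.X ^ r * eulerGF lam a * degExp lam ((x + k) / m)) := by
      rw [hG, Finset.mul_sum, Finset.mul_sum]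
      refine Finset.sum_congr rfl fun k _ => ?_
      rw [hD k]
      have hneg : ((-u) ^ k : PowerSeries ℝ) = PowerSeries.C (R := ℝ) ((-1 : ℝ) ^ k) * u ^ k := by
        rw [neg_pow, map_pow, map_neg, map_one]
      rw [hneg]
      ring
    rw [hexp]
    unfold egfCoeff
    rw [map_sum, Finset.mul_sum]
    refine Finset.sum_congr rfl fun k _ => ?_
    rw [PowerSeries.coeff_C_mul]
    unfold Aa egfCoeff
    ring
  have hR : egfCoeff (PowerSeries.C (R := ℝ) ((m : ℝ) ^ r) * (eulerGF lam (a - 1) *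
        PowerSeries.rescale (1 / (m : ℝ))
          (2 * PowerSeries.X ^ r * degExp μ x * (degExp μ 1 + 1)⁻¹))) n
      = ∑ l ∈ Finset.range (n + 1),
          (n.choose l : ℝ) * A μ r x l * (m : ℝ) ^ ((r : ℤ) - (l : ℤ)) *
            egfCoeff (eulerGF lam (a - 1)) (n - l) := by
    have hCmul : egfCoeff (PowerSeries.C (R := ℝ) ((m : ℝ) ^ r) * (eulerGF lam (a - 1) *
          PowerSeries.rescale (1 / (m : ℝ))
            (2 * PowerSeries.X ^ r * degExp μ x * (degExp μ 1 + 1)⁻¹))) n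
        = (m : ℝ) ^ r * egfCoeff (PowerSeries.rescale (1 / (m : ℝ))
            (2 * PowerSeries.X ^ r * degExp μ x * (degExp μ 1 + 1)⁻¹) *
              eulerGF lam (a - 1)) n := by
      unfold egfCoeff
      rw [mul_comm (eulerGF lam (a - 1)), PowerSeries.coeff_C_mul]
      ring
    rw [hCmul, AltSumAux.egfCoeff_mul, Finset.mul_sum]
    refine Finset.sum_congr rfl fun l hl => ?_
    have hW : egfCoeff (PowerSeries.rescale (1 / (m : ℝ))
          (2 * PowerSeries.X ^ r * degExp μ x * (degExp μ 1 + 1)⁻¹)) l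
        = (1 / (m : ℝ)) ^ l * A μ r x l := by
      unfold A
      unfold egfCoeff
      rw [PowerSeries.coeff_rescale]
      ring
    have hz : (m : ℝ) ^ ((r : ℤ) - (l : ℤ)) = (m : ℝ) ^ r * (1 / (m : ℝ)) ^ l := by
      rw [zpow_sub₀ hmR, zpow_natCast, zpow_natCast, div_eq_mul_inv, one_div, inv_pow]
    rw [hW, hz]
    ring
  rw [hL, hGF, hR]
end
end
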